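/- arXiv:1606.09155 — 6 statements merged into one kernel-verified Lean document; each statement's English description precedes it below -/
import Mathlib

section
/- Let F : E → ℝ, x*, x̃ ∈ E, λ* ∈ H and ε ≥ 0, ρ > 0 with ‖λ*‖ < ρ. Suppose F(x) − F(x*) − ⟨λ*, A x − b⟩ ≥ 0 for all x ∈ E (the KKT saddle inequality), and F(x̃) − F(x*) + ρ‖A x̃ − b‖ ≤ ε. Then ‖A x̃ − b‖ ≤ ε/(ρ − ‖λ*‖), and −‖λ*‖ε/(ρ − ‖λ*‖) ≤ F(x̃) − F(x*) ≤ ε. -/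
/-!
The saddle inequality at `x̃` together with Cauchy–Schwarz gives
`F(x̃) − F(x*) ≥ ⟪λ*, A x̃ − b⟫ ≥ −‖λ*‖ ‖A x̃ − b‖`. Inserting this lower bound into the penalised
inequality leaves `(ρ − ‖λ*‖) ‖A x̃ − b‖ ≤ ε`, and the residual bound in turn bounds the gap below.
-/

open scoped RealInnerProductSpace

section PenaltyBounds

variable {gap res l ρ ε : ℝ}

theorem residual_le_of_penalty (hlρ : l < ρ) (hlow : -(l * res) ≤ gap)
    (hpen : gap + ρ * res ≤ ε) : res ≤ ε / (ρ - l) := by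
  rw [le_div_iff₀ (sub_pos.mpr hlρ)]
  linarith

theorem neg_mul_div_le_gap_of_penalty (hl : 0 ≤ l) (hlρ : l < ρ) (hlow : -(l * res) ≤ gap)
    (hpen : gap + ρ * res ≤ ε) : -(l * ε / (ρ - l)) ≤ gap := by
  have hres := residual_le_of_penalty hlρ hlow hpen
  calc -(l * ε / (ρ - l)) = -(l * (ε / (ρ - l))) := by rw [mul_div_assoc]
    _ ≤ -(l * res) := neg_le_neg (mul_le_mul_of_nonneg_left hres hl)
    _ ≤ gap := hlow

end PenaltyBounds

theorem neg_norm_mul_norm_le_real_inner {F : Type*} [NormedAddCommGroup F] [InnerProductSpace ℝ F]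
    (x y : F) : -(‖x‖ * ‖y‖) ≤ ⟪x, y⟫ :=
  neg_le_of_abs_le (abs_real_inner_le_norm x y)

theorem stmt_2_general {E H : Type*}
    [NormedAddCommGroup E] [InnerProductSpace ℝ E]
    [NormedAddCommGroup H] [InnerProductSpace ℝ H]
    (A : E →L[ℝ] H) (b : H) (F : E → ℝ)
    (xs xt : E) (ls : H) (ε ρ : ℝ)
    (hls : ‖ls‖ < ρ)
    (hkkt : ∀ x : E, 0 ≤ F x - F xs - ⟪ls, A x - b⟫)
    (hineq : F xt - F xs + ρ * ‖A xt - b‖ ≤ ε) :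
    ‖A xt - b‖ ≤ ε / (ρ - ‖ls‖) ∧
      -(‖ls‖ * ε / (ρ - ‖ls‖)) ≤ F xt - F xs ∧ F xt - F xs ≤ ε := by
  have hlow : -(‖ls‖ * ‖A xt - b‖) ≤ F xt - F xs :=
    (neg_norm_mul_norm_le_real_inner ls (A xt - b)).trans (by linarith [hkkt xt])
  have hpenalty_nonneg : 0 ≤ ρ * ‖A xt - b‖ :=
    mul_nonneg ((norm_nonneg ls).trans hls.le) (norm_nonneg _)
  exact ⟨residual_le_of_penalty hls hlow hineq,
    neg_mul_div_le_gap_of_penalty (norm_nonneg ls) hls hlow hineq, by linarith⟩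

/-- From the KKT saddle inequality and
`F(x̃) − F(x*) + ρ‖A x̃ − b‖ ≤ ε` with `‖λ*‖ < ρ`, deduce
`‖A x̃ − b‖ ≤ ε/(ρ − ‖λ*‖)` and `−‖λ*‖ε/(ρ − ‖λ*‖) ≤ F(x̃) − F(x*) ≤ ε`. -/
theorem stmt_2 {E H : Type*}
    [NormedAddCommGroup E] [InnerProductSpace ℝ E] [FiniteDimensional ℝ E]
    [NormedAddCommGroup H] [InnerProductSpace ℝ H] [FiniteDimensional ℝ H]
    (A : E →L[ℝ] H) (b : H) (F : E → ℝ)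
    (xs xt : E) (ls : H) (ε ρ : ℝ)
    (hε : 0 ≤ ε) (hρ : 0 < ρ) (hls : ‖ls‖ < ρ)
    (hkkt : ∀ x : E, 0 ≤ F x - F xs - ⟪ls, A x - b⟫)
    (hineq : F xt - F xs + ρ * ‖A xt - b‖ ≤ ε) :
    ‖A xt - b‖ ≤ ε / (ρ - ‖ls‖) ∧
      -(‖ls‖ * ε / (ρ - ‖ls‖)) ≤ F xt - F xs ∧ F xt - F xs ≤ ε :=
  stmt_2_general A b F xs xt ls ε ρ hls hkkt hineq
end

section
/- Let f : E → ℝ be convex and differentiable with L_f-Lipschitz gradient (L_f ≥ 0). Let α ∈ [0,1] and x̄, xᵏ, x⁺, x ∈ E, and set x̂ = (1−α)x̄ + α xᵏ and x̄⁺ = (1−α)x̄ + α x⁺. Then f(x̄⁺) ≤ (1−α) f(x̄) + α f(x) + α ⟨∇f(x̂), x⁺ − x⟩ + (α² L_f / 2) ‖x⁺ − xᵏ‖². -/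
/-!
Let `x̂ = (1-α)x̄ + αxᵏ`. Since `x̄⁺ - x̂ = α(x⁺ - xᵏ)`, the descent lemma at `x̂` bounds `f(x̄⁺)` by
`f(x̂) + α⟨∇f(x̂), x⁺ - xᵏ⟩ + (α²L_f/2)‖x⁺ - xᵏ‖²`. Convexity puts `f` above its tangent plane at `x̂`,
and averaging the tangent inequalities at `x̄` and `x` with weights `1-α`, `α` gives
`f(x̂) ≤ (1-α)f(x̄) + αf(x) + α⟨∇f(x̂), xᵏ - x⟩`; the two inner products add up to `α⟨∇f(x̂), x⁺ - x⟩`.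
-/

open scoped RealInnerProductSpace

section

variable {E : Type*} [NormedAddCommGroup E] [InnerProductSpace ℝ E] {a b : E} {t : ℝ}

theorem inner_lineMap_le_of_lipschitz_at {f' : E → E} {L : ℝ}
    (hlip : ∀ x, ‖f' x - f' a‖ ≤ L * ‖x - a‖) (ht : 0 ≤ t) :
    ⟪f' (AffineMap.lineMap a b t), b - a⟫ ≤ ⟪f' a, b - a⟫ + L * t * ‖b - a‖ ^ 2 := by
  have hdisp : AffineMap.lineMap a b t - a = t • (b - a) := AffineMap.lineMap_vsub_left a b t
  calc ⟪f' (AffineMap.lineMap a b t), b - a⟫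
      = ⟪f' a, b - a⟫ + ⟪f' (AffineMap.lineMap a b t) - f' a, b - a⟫ := by
        rw [inner_sub_left]; ring
    _ ≤ ⟪f' a, b - a⟫ + ‖f' (AffineMap.lineMap a b t) - f' a‖ * ‖b - a‖ := by
        gcongr; exact real_inner_le_norm _ _
    _ ≤ ⟪f' a, b - a⟫ + L * ‖AffineMap.lineMap a b t - a‖ * ‖b - a‖ := by
        gcongr; exact hlip _
    _ = ⟪f' a, b - a⟫ + L * t * ‖b - a‖ ^ 2 := by
        rw [hdisp, norm_smul, Real.norm_of_nonneg ht]; ring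

variable [CompleteSpace E] {f : E → ℝ} {g : E}

theorem HasGradientAt.hasDerivAt_comp_lineMap
    (hf : HasGradientAt f g (AffineMap.lineMap a b t)) :
    HasDerivAt (fun s : ℝ => f (AffineMap.lineMap a b s)) ⟪g, b - a⟫ t := by
  have := hf.hasFDerivAt.comp_hasDerivAt t AffineMap.hasDerivAt_lineMap
  rw [InnerProductSpace.toDual_apply_apply] at this
  exact this

theorem ConvexOn.add_inner_le_of_hasGradientAt {s : Set E} (hconv : ConvexOn ℝ s f)
    (ha : a ∈ s) (hb : b ∈ s) (hf : HasGradientAt f g a) :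
    f a + ⟪g, b - a⟫ ≤ f b := by
  have hline : ConvexOn ℝ (AffineMap.lineMap a b ⁻¹' s)
      (fun t : ℝ => f (AffineMap.lineMap a b t)) :=
    hconv.comp_affineMap _
  have hderiv : HasDerivAt (fun t : ℝ => f (AffineMap.lineMap a b t)) ⟪g, b - a⟫ 0 :=
    HasGradientAt.hasDerivAt_comp_lineMap (by simpa using hf)
  have hslope := hline.le_slope_of_hasDerivAt (by simpa using ha) (by simpa using hb) one_pos hderiv
  simp only [slope, sub_zero, inv_one, AffineMap.lineMap_apply_one, AffineMap.lineMap_apply_zero,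
    vsub_eq_sub, smul_eq_mul, one_mul] at hslope
  linarith

theorem ConvexOn.le_add_inner_of_hasGradientAt {s : Set E} (hconv : ConvexOn ℝ s f)
    {y u v : E} (hy : y ∈ s) (hu : u ∈ s) (hv : v ∈ s) (hf : HasGradientAt f g y)
    {α : ℝ} (hα0 : 0 ≤ α) (hα1 : α ≤ 1) :
    f y ≤ (1 - α) * f u + α * f v + ⟪g, y - ((1 - α) • u + α • v)⟫ := by
  have htu := hconv.add_inner_le_of_hasGradientAt hy hu hf
  have htv := hconv.add_inner_le_of_hasGradientAt hy hv hf
  have hlin : ⟪g, y - ((1 - α) • u + α • v)⟫ = -((1 - α) * ⟪g, u - y⟫ + α * ⟪g, v - y⟫) := by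
    rw [← real_inner_smul_right, ← real_inner_smul_right, ← inner_add_right, ← inner_neg_right]
    congr 1
    module
  nlinarith [mul_le_mul_of_nonneg_left htu (sub_nonneg.2 hα1), mul_le_mul_of_nonneg_left htv hα0]

theorem le_add_inner_add_sq_of_lipschitz_gradient_at {f' : E → E} {L : ℝ}
    (hgrad : ∀ x, HasGradientAt f (f' x) x) (hlip : ∀ x, ‖f' x - f' a‖ ≤ L * ‖x - a‖) :
    f b ≤ f a + ⟪f' a, b - a⟫ + L / 2 * ‖b - a‖ ^ 2 := by
  set φ : ℝ → ℝ := fun t => f (AffineMap.lineMap a b t)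
  set B : ℝ → ℝ := fun t => f a + t * ⟪f' a, b - a⟫ + L / 2 * ‖b - a‖ ^ 2 * t ^ 2
  have hφ (t : ℝ) : HasDerivAt φ ⟪f' (AffineMap.lineMap a b t), b - a⟫ t :=
    (hgrad _).hasDerivAt_comp_lineMap
  have hB (t : ℝ) : HasDerivAt B (⟪f' a, b - a⟫ + L * t * ‖b - a‖ ^ 2) t := by
    refine (((hasDerivAt_id t).mul_const ⟪f' a, b - a⟫).const_add (f a)).add
      ((hasDerivAt_pow 2 t).const_mul (L / 2 * ‖b - a‖ ^ 2)) |>.congr_deriv ?_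
    simp only [one_mul, Nat.cast_ofNat, pow_one, Nat.add_one_sub_one]
    ring
  have hφB := image_le_of_deriv_right_le_deriv_boundary (a := 0) (b := 1)
    (fun t _ => (hφ t).continuousAt.continuousWithinAt) (fun t _ => (hφ t).hasDerivWithinAt)
    (by simp [φ, B]) (fun t _ => (hB t).continuousAt.continuousWithinAt)
    (fun t _ => (hB t).hasDerivWithinAt) (fun t ht => inner_lineMap_le_of_lipschitz_at hlip ht.1)
    (Set.right_mem_Icc.2 zero_le_one)
  simpa [φ, B] using hφB

end

theorem stmt_3_general {E : Type*}
    [NormedAddCommGroup E] [InnerProductSpace ℝ E] [FiniteDimensional ℝ E]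
    (f : E → ℝ) (f' : E → E) (Lf : ℝ)
    (hconv : ConvexOn ℝ Set.univ f)
    (hgrad : ∀ x : E, HasGradientAt f (f' x) x)
    (hlip : ∀ x x' : E, ‖f' x - f' x'‖ ≤ Lf * ‖x - x'‖)
    (α : ℝ) (hα0 : 0 ≤ α) (hα1 : α ≤ 1)
    (xb xk xp x : E) :
    f ((1 - α) • xb + α • xp) ≤
      (1 - α) * f xb + α * f x
        + α * ⟪f' ((1 - α) • xb + α • xk), xp - x⟫
        + α ^ 2 * Lf / 2 * ‖xp - xk‖ ^ 2 := by
  set xh := (1 - α) • xb + α • xk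
  have hdesc := le_add_inner_add_sq_of_lipschitz_gradient_at (a := xh)
    (b := (1 - α) • xb + α • xp) hgrad (fun y => hlip y xh)
  have hstep : (1 - α) • xb + α • xp - xh = α • (xp - xk) := by module
  rw [hstep, real_inner_smul_right, norm_smul, mul_pow, Real.norm_eq_abs, sq_abs] at hdesc
  have htangent := hconv.le_add_inner_of_hasGradientAt (Set.mem_univ xh) (Set.mem_univ xb)
    (Set.mem_univ x) (hgrad xh) hα0 hα1
  have hgap : xh - ((1 - α) • xb + α • x) = α • (xk - x) := by module
  rw [hgap, real_inner_smul_right] at htangent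
  have hsplit : ⟪f' xh, xp - xk⟫ + ⟪f' xh, xk - x⟫ = ⟪f' xh, xp - x⟫ := by
    rw [← inner_add_right, sub_add_sub_cancel]
  linear_combination hdesc + htangent + α * hsplit

/-- For convex `f` with `L_f`-Lipschitz gradient, with
`x̂ = (1−α)x̄ + α xᵏ` and `x̄⁺ = (1−α)x̄ + α x⁺`,
`f(x̄⁺) ≤ (1−α) f(x̄) + α f(x) + α ⟨∇f(x̂), x⁺ − x⟩ + (α² L_f / 2) ‖x⁺ − xᵏ‖²`. -/
theorem stmt_3 {E : Type*}
    [NormedAddCommGroup E] [InnerProductSpace ℝ E] [FiniteDimensional ℝ E]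
    (f : E → ℝ) (f' : E → E) (Lf : ℝ) (hLf : 0 ≤ Lf)
    (hconv : ConvexOn ℝ Set.univ f)
    (hgrad : ∀ x : E, HasGradientAt f (f' x) x)
    (hlip : ∀ x x' : E, ‖f' x - f' x'‖ ≤ Lf * ‖x - x'‖)
    (α : ℝ) (hα0 : 0 ≤ α) (hα1 : α ≤ 1)
    (xb xk xp x : E) :
    f ((1 - α) • xb + α • xp) ≤
      (1 - α) * f xb + α * f x
        + α * ⟪f' ((1 - α) • xb + α • xk), xp - x⟫
        + α ^ 2 * Lf / 2 * ‖xp - xk‖ ^ 2 :=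
  stmt_3_general f f' Lf hconv hgrad hlip α hα0 hα1 xb xk xp x
end

section
/- (One-iteration result for linearized ALM.) Let α ∈ [0,1], β ≥ 0, γ > 0, and let P be a self-adjoint operator on E. Given xᵏ, x̄ᵏ ∈ E and λᵏ ∈ H, set x̂ᵏ = (1−α)x̄ᵏ + α xᵏ; suppose x^{k+1} ∈ E satisfies the optimality condition: there is a subgradient u of g at x^{k+1} with ∇f(x̂ᵏ) + u − A*λᵏ + β A*(A x^{k+1} − b) + P(x^{k+1} − xᵏ) = 0; set x̄^{k+1} = (1−α)x̄ᵏ + α x^{k+1} and λ^{k+1} = λᵏ − γ(A x^{k+1} − b). Then for every x ∈ E with A x = b and every λ ∈ H: [F(x̄^{k+1}) − F(x) − ⟨λ, A x̄^{k+1} − b⟩] − (1−α)[F(x̄ᵏ) − F(x) − ⟨λ, A x̄ᵏ − b⟩] ≤ −(α/2)[‖x^{k+1} − x‖²_P − ‖xᵏ − x‖²_P + ‖x^{k+1} − xᵏ‖²_P] + (α² L_f / 2)‖x^{k+1} − xᵏ‖² + (α/(2γ))[‖λᵏ − λ‖² − ‖λ^{k+1} − λ‖² + ‖λ^{k+1}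 − λᵏ‖²] − (αβ/γ²)‖λ^{k+1} − λᵏ‖². -/
/-!
Write `r = A x^{k+1} - b = A (x^{k+1} - x)`. The gradient inequality of `f` at `x̂ᵏ` (towards `x̄ᵏ`
and `x`), the descent lemma from `x̂ᵏ` to `x̄^{k+1} = x̂ᵏ + α (x^{k+1} - xᵏ)`, convexity of `g` and
the subgradient inequality at `x^{k+1}` bound the left side by
`α ⟪∇f(x̂ᵏ) + u, x^{k+1} - x⟫ - α ⟪λ, r⟫ + α² L_f / 2 ‖x^{k+1} - xᵏ‖²`. Testing the optimality
condition against `x^{k+1} - x` turns the inner product into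
`⟪λᵏ, r⟫ - β ‖r‖² - ⟪P (x^{k+1} - xᵏ), x^{k+1} - x⟫`, and the three-point identity
`2 ⟪a - b, a - c⟫ = ‖a - c‖² - ‖b - c‖² + ‖a - b‖²`, for `‖·‖_P` and for `‖·‖` with
`λᵏ - λ^{k+1} = γ r`, rewrites this as the right side.
-/

open scoped RealInnerProductSpace

section Gradient

variable {E : Type*} [NormedAddCommGroup E] [InnerProductSpace ℝ E] [CompleteSpace E]
  {f : E → ℝ} {f' : E → E}

theorem hasDerivAt_comp_add_smul_of_hasGradientAt (hf : ∀ z, HasGradientAt f (f' z) z)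
    (x v : E) (t : ℝ) :
    HasDerivAt (fun s : ℝ ↦ f (x + s • v)) ⟪f' (x + t • v), v⟫ t := by
  have hline : HasDerivAt (fun s : ℝ ↦ x + s • v) v t := by
    simpa using ((hasDerivAt_id t).smul_const v).const_add x
  simpa [InnerProductSpace.toDual_apply_apply, Function.comp_def] using
    (hasGradientAt_iff_hasFDerivAt.mp (hf (x + t • v))).comp_hasDerivAt t hline

theorem ConvexOn.add_inner_le_of_hasGradientAt_s4 (hconv : ConvexOn ℝ Set.univ f)
    (hf : ∀ z, HasGradientAt f (f' z) z) (x y : E) :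
    f x + ⟪f' x, y - x⟫ ≤ f y := by
  have hline : ConvexOn ℝ Set.univ (fun t : ℝ ↦ f (x + t • (y - x))) := by
    simpa [Function.comp_def, AffineMap.lineMap_apply, add_comm] using
      hconv.comp_affineMap (AffineMap.lineMap x y : ℝ →ᵃ[ℝ] E)
  have hslope := hline.le_slope_of_hasDerivAt (Set.mem_univ 0) (Set.mem_univ 1) one_pos
    (by simpa using hasDerivAt_comp_add_smul_of_hasGradientAt hf x (y - x) 0)
  simp only [slope_def_field, one_smul, add_sub_cancel, zero_smul, add_zero, sub_zero,
    div_one] at hslope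
  linarith

theorem le_add_inner_add_sq_of_lipschitz_gradient {L : ℝ} (hf : ∀ z, HasGradientAt f (f' z) z)
    (hlip : ∀ z z', ‖f' z - f' z'‖ ≤ L * ‖z - z'‖) (x y : E) :
    f y ≤ f x + ⟪f' x, y - x⟫ + L / 2 * ‖y - x‖ ^ 2 := by
  set v := y - x
  set ψ : ℝ → ℝ := fun t ↦ f (x + t • v) - t * ⟪f' x, v⟫ - L / 2 * ‖v‖ ^ 2 * t ^ 2
  have hψ : ∀ t, HasDerivAt ψ (⟪f' (x + t • v), v⟫ - ⟪f' x, v⟫ - L * ‖v‖ ^ 2 * t) t := by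
    intro t
    refine (((hasDerivAt_comp_add_smul_of_hasGradientAt hf x v t).sub
      ((hasDerivAt_id t).mul_const _)).sub
        ((hasDerivAt_pow 2 t).const_mul (L / 2 * ‖v‖ ^ 2))).congr_deriv ?_
    simp only [Nat.cast_ofNat]
    ring
  have hψ' : ∀ t ∈ interior (Set.Ici (0 : ℝ)),
      ⟪f' (x + t • v), v⟫ - ⟪f' x, v⟫ - L * ‖v‖ ^ 2 * t ≤ 0 := by
    intro t ht
    rw [interior_Ici, Set.mem_Ioi] at ht
    rw [sub_nonpos]
    calc ⟪f' (x + t • v), v⟫ - ⟪f' x, v⟫ = ⟪f' (x + t • v) - f' x, v⟫ := (inner_sub_left ..).symm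
      _ ≤ ‖f' (x + t • v) - f' x‖ * ‖v‖ := real_inner_le_norm _ _
      _ ≤ L * ‖x + t • v - x‖ * ‖v‖ := by gcongr; exact hlip _ _
      _ = L * ‖v‖ ^ 2 * t := by
        rw [add_sub_cancel_left, norm_smul, Real.norm_of_nonneg ht.le]; ring
  have hanti := antitoneOn_of_hasDerivWithinAt_nonpos (convex_Ici 0)
    (fun t _ ↦ (hψ t).continuousAt.continuousWithinAt) (fun t _ ↦ (hψ t).hasDerivWithinAt) hψ'
  have := hanti Set.self_mem_Ici (Set.mem_Ici.mpr zero_le_one) zero_le_one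
  simp only [ψ, one_smul, zero_smul, add_zero, v, add_sub_cancel] at this
  linarith

theorem ConvexOn.apply_convexComb_le_of_lipschitz_gradient {L α : ℝ}
    (hconv : ConvexOn ℝ Set.univ f) (hf : ∀ z, HasGradientAt f (f' z) z)
    (hlip : ∀ z z', ‖f' z - f' z'‖ ≤ L * ‖z - z'‖) (hα0 : 0 ≤ α) (hα1 : α ≤ 1)
    (xb z z' x : E) :
    f ((1 - α) • xb + α • z') ≤ (1 - α) * f xb
      + α * (f x + ⟪f' ((1 - α) • xb + α • z), z' - x⟫) + α ^ 2 * L / 2 * ‖z' - z‖ ^ 2 := by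
  set xh := (1 - α) • xb + α • z
  have hdescent := le_add_inner_add_sq_of_lipschitz_gradient hf hlip xh ((1 - α) • xb + α • z')
  have hstep : (1 - α) • xb + α • z' - xh = α • (z' - z) := by simp only [xh]; module
  have hsplit : ⟪f' xh, α • (z' - z)⟫
      = (1 - α) * ⟪f' xh, xb - xh⟫ + α * ⟪f' xh, x - xh⟫ + α * ⟪f' xh, z' - x⟫ := by
    rw [show α • (z' - z) = (1 - α) • (xb - xh) + α • (x - xh) + α • (z' - x) by
      simp only [xh]; module]
    simp only [inner_add_right, real_inner_smul_right]
  rw [hstep, hsplit, norm_smul, mul_pow, Real.norm_eq_abs, sq_abs] at hdescent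
  have hxb := mul_le_mul_of_nonneg_left (hconv.add_inner_le_of_hasGradientAt_s4 hf xh xb)
    (sub_nonneg.mpr hα1)
  have hx := mul_le_mul_of_nonneg_left (hconv.add_inner_le_of_hasGradientAt_s4 hf xh x) hα0
  linarith

end Gradient

section Algebra

variable {E : Type*} [NormedAddCommGroup E] [InnerProductSpace ℝ E]

theorem ConvexOn.apply_convexComb_le_of_subgradient {g : E → ℝ} {u z' : E} {α : ℝ}
    (hconv : ConvexOn ℝ Set.univ g) (hα0 : 0 ≤ α) (hα1 : α ≤ 1)
    (hu : ∀ x', g x' ≥ g z' + ⟪u, x' - z'⟫) (xb x : E) :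
    g ((1 - α) • xb + α • z') ≤ (1 - α) * g xb + α * (g x + ⟪u, z' - x⟫) := by
  have hcomb := hconv.2 (Set.mem_univ xb) (Set.mem_univ z') (sub_nonneg.mpr hα1) hα0 (by ring)
  have hsub : g z' ≤ g x + ⟪u, z' - x⟫ := by
    have := hu x
    rw [← neg_sub z' x, inner_neg_right] at this
    linarith
  rw [smul_eq_mul, smul_eq_mul] at hcomb
  linarith [mul_le_mul_of_nonneg_left hsub hα0]

theorem LinearMap.IsSymmetric.three_point {T : E →ₗ[ℝ] E} (hT : T.IsSymmetric) (p q c : E) :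
    ⟪p - c, T (p - c)⟫ - ⟪q - c, T (q - c)⟫ + ⟪p - q, T (p - q)⟫ = 2 * ⟪T (p - q), p - c⟫ := by
  rw [show p - c = (p - q) + (q - c) by abel]
  have hsymm : ⟪p - q, T (q - c)⟫ = ⟪q - c, T (p - q)⟫ := by
    rw [← hT, real_inner_comm]
  simp only [map_add, inner_add_left, inner_add_right, hsymm, ← real_inner_comm (T (p - q))]
  ring

theorem norm_sub_sq_three_point (p q c : E) :
    ‖p - c‖ ^ 2 - ‖q - c‖ ^ 2 + ‖p - q‖ ^ 2 = 2 * ⟪p - q, p - c⟫ := by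
  simpa only [LinearMap.id_apply, real_inner_self_eq_norm_sq] using
    LinearMap.IsSymmetric.id.three_point p q c

theorem inner_sub_eq_of_stationary {H : Type*} [NormedAddCommGroup H] [InnerProductSpace ℝ H]
    [CompleteSpace E] [CompleteSpace H] {A : E →L[ℝ] H} {b : H} {v q z x : E} {μ : H} {β : ℝ}
    (hx : A x = b)
    (hstat : v - A.adjoint μ + β • A.adjoint (A z - b) + q = 0) :
    ⟪v, z - x⟫ = ⟪μ, A z - b⟫ - β * ‖A z - b‖ ^ 2 - ⟪q, z - x⟫ := by
  set r := A z - b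
  have hAzx : A (z - x) = r := by rw [map_sub, hx]
  have := congrArg (⟪·, z - x⟫) hstat
  simp only [inner_add_left, inner_sub_left, real_inner_smul_left, inner_zero_left,
    ContinuousLinearMap.adjoint_inner_left, hAzx, real_inner_self_eq_norm_sq] at this
  linarith

end Algebra

theorem stmt_4_general {E H : Type*}
    [NormedAddCommGroup E] [InnerProductSpace ℝ E] [FiniteDimensional ℝ E]
    [NormedAddCommGroup H] [InnerProductSpace ℝ H] [FiniteDimensional ℝ H]
    (A : E →L[ℝ] H) (b : H)
    (f : E → ℝ) (f' : E → E) (Lf : ℝ)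
    (hfconv : ConvexOn ℝ Set.univ f)
    (hgrad : ∀ x : E, HasGradientAt f (f' x) x)
    (hlip : ∀ x x' : E, ‖f' x - f' x'‖ ≤ Lf * ‖x - x'‖)
    (g : E → ℝ) (hgconv : ConvexOn ℝ Set.univ g)
    (α β γ : ℝ) (hα0 : 0 ≤ α) (hα1 : α ≤ 1) (hγ : 0 < γ)
    (P : E →L[ℝ] E) (hP : IsSelfAdjoint P)
    (xk xbk : E) (lamk : H)
    (xhk : E) (hxhk : xhk = (1 - α) • xbk + α • xk)
    (xk1 : E)
    (hopt : ∃ u : E,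
      (∀ x' : E, g x' ≥ g xk1 + ⟪u, x' - xk1⟫) ∧
      f' xhk + u - (ContinuousLinearMap.adjoint A) lamk
        + β • (ContinuousLinearMap.adjoint A) (A xk1 - b)
        + P (xk1 - xk) = 0)
    (xbk1 : E) (hxbk1 : xbk1 = (1 - α) • xbk + α • xk1)
    (lamk1 : H) (hlamk1 : lamk1 = lamk - γ • (A xk1 - b)) :
    ∀ x : E, A x = b → ∀ lam : H,
      ((f xbk1 + g xbk1) - (f x + g x) - ⟪lam, A xbk1 - b⟫)
          - (1 - α) * ((f xbk + g xbk) - (f x + g x) - ⟪lam, A xbk - b⟫)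
        ≤ -(α / 2) * (⟪xk1 - x, P (xk1 - x)⟫ - ⟪xk - x, P (xk - x)⟫
              + ⟪xk1 - xk, P (xk1 - xk)⟫)
          + α ^ 2 * Lf / 2 * ‖xk1 - xk‖ ^ 2
          + α / (2 * γ) * (‖lamk - lam‖ ^ 2 - ‖lamk1 - lam‖ ^ 2 + ‖lamk1 - lamk‖ ^ 2)
          - α * β / γ ^ 2 * ‖lamk1 - lamk‖ ^ 2 := by
  intro x hx lam
  obtain ⟨u, hu, hstat⟩ := hopt
  subst hxhk hxbk1
  set r := A xk1 - b
  have hf := hfconv.apply_convexComb_le_of_lipschitz_gradient hgrad hlip hα0 hα1 xbk xk xk1 x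
  have hg := hgconv.apply_convexComb_le_of_subgradient hα0 hα1 hu xbk x
  have hstat_inner := inner_sub_eq_of_stationary hx hstat
  rw [inner_add_left] at hstat_inner
  have hP_three_point := hP.isSymmetric.three_point xk1 xk x
  simp only [ContinuousLinearMap.coe_coe] at hP_three_point
  have hlam_step : lamk - lamk1 = γ • r := by rw [hlamk1, sub_sub_cancel]
  have hlam_three_point := norm_sub_sq_three_point lamk lamk1 lam
  rw [hlam_step, real_inner_smul_left, inner_sub_right] at hlam_three_point
  have hlam_affine : ⟪lam, A ((1 - α) • xbk + α • xk1) - b⟫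
      = (1 - α) * ⟪lam, A xbk - b⟫ + α * ⟪lam, r⟫ := by
    rw [← real_inner_smul_right, ← real_inner_smul_right, ← inner_add_right]
    congr 1
    simp only [r, map_add, map_smul]
    module
  rw [norm_sub_rev lamk1 lamk, hlam_step, hlam_three_point, norm_smul, mul_pow, Real.norm_eq_abs, sq_abs]
  field_simp
  rw [real_inner_comm lamk, real_inner_comm lam]
  linear_combination 2 * hf + 2 * hg + 2 * α * hstat_inner + α * hP_three_point - 2 * hlam_affine

/-- One-iteration result for the linearized ALM (Lemma 2.4 in the paper). -/
theorem stmt_4 {E H : Type*}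
    [NormedAddCommGroup E] [InnerProductSpace ℝ E] [FiniteDimensional ℝ E]
    [NormedAddCommGroup H] [InnerProductSpace ℝ H] [FiniteDimensional ℝ H]
    (A : E →L[ℝ] H) (b : H)
    (f : E → ℝ) (f' : E → E) (Lf : ℝ) (hLf : 0 ≤ Lf)
    (hfconv : ConvexOn ℝ Set.univ f)
    (hgrad : ∀ x : E, HasGradientAt f (f' x) x)
    (hlip : ∀ x x' : E, ‖f' x - f' x'‖ ≤ Lf * ‖x - x'‖)
    (g : E → ℝ) (hgconv : ConvexOn ℝ Set.univ g)
    (α β γ : ℝ) (hα0 : 0 ≤ α) (hα1 : α ≤ 1) (hβ : 0 ≤ β) (hγ : 0 < γ)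
    (P : E →L[ℝ] E) (hP : IsSelfAdjoint P)
    (xk xbk : E) (lamk : H)
    (xhk : E) (hxhk : xhk = (1 - α) • xbk + α • xk)
    (xk1 : E)
    (hopt : ∃ u : E,
      (∀ x' : E, g x' ≥ g xk1 + ⟪u, x' - xk1⟫) ∧
      f' xhk + u - (ContinuousLinearMap.adjoint A) lamk
        + β • (ContinuousLinearMap.adjoint A) (A xk1 - b)
        + P (xk1 - xk) = 0)
    (xbk1 : E) (hxbk1 : xbk1 = (1 - α) • xbk + α • xk1)
    (lamk1 : H) (hlamk1 : lamk1 = lamk - γ • (A xk1 - b)) :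
    ∀ x : E, A x = b → ∀ lam : H,
      ((f xbk1 + g xbk1) - (f x + g x) - ⟪lam, A xbk1 - b⟫)
          - (1 - α) * ((f xbk + g xbk) - (f x + g x) - ⟪lam, A xbk - b⟫)
        ≤ -(α / 2) * (⟪xk1 - x, P (xk1 - x)⟫ - ⟪xk - x, P (xk - x)⟫
              + ⟪xk1 - xk, P (xk1 - xk)⟫)
          + α ^ 2 * Lf / 2 * ‖xk1 - xk‖ ^ 2
          + α / (2 * γ) * (‖lamk - lam‖ ^ 2 - ‖lamk1 - lam‖ ^ 2 + ‖lamk1 - lamk‖ ^ 2)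
          - α * β / γ ^ 2 * ‖lamk1 - lamk‖ ^ 2 :=
  stmt_4_general A b f f' Lf hfconv hgrad hlip g hgconv α β γ hα0 hα1 hγ P hP xk xbk lamk xhk hxhk
    xk1 hopt xbk1 hxbk1 lamk1 hlamk1
end

section
/- (Per-iteration monotonicity of linearized ALM with constant parameters.) Let β > 0, γ ∈ (0, 2β), and let P be a self-adjoint operator on E with P − L_f·I positive definite. Let (xᵏ)_{k≥1} ⊂ E and (λᵏ)_{k≥1} ⊂ H be such that for each k ≥ 1 there is a subgradient uᵏ of g at x^{k+1} with ∇f(xᵏ) + uᵏ − A*λᵏ + β A*(A x^{k+1} − b) + P(x^{k+1} − xᵏ) = 0, and λ^{k+1} = λᵏ − γ(A x^{k+1} − b). Suppose (x*, λ*) satisfies the KKT conditions. Then for every k ≥ 1: ‖x^{k+1} − x*‖²_P + ‖x^{k+1} − xᵏ‖²_{P − L_f I} + (1/γ)‖λ^{k+1} − λ*‖² + (1/γ)(2β/γ − 1)‖λ^{k+1} − λᵏ‖² ≤ ‖xᵏ − x*‖²_P + (1/γ)‖λᵏ − λ*‖². In particular the sequence ‖xᵏ − x*‖²_P + (1/γ)‖λᵏ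 − λ*‖² is nonincreasing and (xᵏ, λᵏ) is bounded. -/
/-!
Write `d = x^{k+1} - x*`, `e = x^{k+1} - x^k` and `r = A x^{k+1} - b = A d = (λ^k - λ^{k+1}) / γ`.
Testing three facts against `d` and adding them gives
`-(L_f / 2) ‖e‖² ≤ ⟪λ^k - λ*, r⟫ - β ‖r‖² - ⟪P e, d⟫`:
monotonicity of `∂g` between `(x^{k+1}, u^k)` and `(x*, A*λ* - ∇f x*)`; the bound
`⟪∇f x^k - ∇f x*, d⟫ ≥ -(L_f / 2) ‖e‖²`, from convexity of `f` at `x^k` and at `x*` together with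
the descent lemma at `x^k`; and the optimality equation. Expanding `‖x^k - x*‖²_P = ‖d - e‖²_P`
and the dual errors turns this into the per-iteration inequality. Its extra terms are nonnegative
because `γ < 2β` and `P - L_f I ≻ 0`. In finite dimension `P ≻ 0` is uniform (the unit sphere is
compact), so the nonincreasing Lyapunov quantity bounds the iterates.
-/

open scoped RealInnerProductSpace
open Set

section Gradient

variable {E : Type*} [NormedAddCommGroup E] [InnerProductSpace ℝ E] [CompleteSpace E]
  {f : E → ℝ}

lemma HasGradientAt.hasDerivAt_comp_add_smul {g x e : E} {t : ℝ}
    (h : HasGradientAt f g (x + t • e)) :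
    HasDerivAt (fun s : ℝ => f (x + s • e)) ⟪g, e⟫ t := by
  have hline : HasDerivAt (fun s : ℝ => x + s • e) e t := by
    simpa using ((hasDerivAt_id t).smul_const e).const_add x
  simpa only [InnerProductSpace.toDual_apply_apply, Function.comp_def] using
    h.hasFDerivAt.comp_hasDerivAt t hline

lemma ConvexOn.add_inner_sub_le_of_hasGradientAt (hf : ConvexOn ℝ univ f) {g x : E}
    (hx : HasGradientAt f g x) (y : E) :
    f x + ⟪g, y - x⟫ ≤ f y := by
  have hline : ConvexOn ℝ univ (fun t : ℝ => f (x + t • (y - x))) := by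
    have := hf.comp_affineMap (AffineMap.lineMap x y)
    simpa [Function.comp_def, AffineMap.lineMap_apply_module', add_comm] using this
  have hslope := hline.le_slope_of_hasDerivAt (mem_univ 0) (mem_univ 1) one_pos
    (HasGradientAt.hasDerivAt_comp_add_smul (by simpa using hx))
  simp only [slope_def_field, one_smul, add_sub_cancel, zero_smul, add_zero, sub_zero, div_one]
    at hslope
  linarith

lemma le_add_inner_sub_add_sq_of_lipschitz_gradient {f' : E → E} {L : ℝ}
    (hf : ∀ x, HasGradientAt f (f' x) x) (hlip : ∀ x y, ‖f' x - f' y‖ ≤ L * ‖x - y‖)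
    (x y : E) :
    f y ≤ f x + ⟪f' x, y - x⟫ + L / 2 * ‖y - x‖ ^ 2 := by
  set e := y - x
  set ψ : ℝ → ℝ := fun t => f (x + t • e) - t * ⟪f' x, e⟫ - L / 2 * t ^ 2 * ‖e‖ ^ 2
  have hψ : ∀ t, HasDerivAt ψ (⟪f' (x + t • e), e⟫ - ⟪f' x, e⟫ - L * t * ‖e‖ ^ 2) t := by
    intro t
    have hlin : HasDerivAt (fun s : ℝ => s * ⟪f' x, e⟫) ⟪f' x, e⟫ t := by
      simpa using (hasDerivAt_id t).mul_const ⟪f' x, e⟫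
    have hsq : HasDerivAt (fun s : ℝ => L / 2 * s ^ 2 * ‖e‖ ^ 2) (L * t * ‖e‖ ^ 2) t := by
      refine (((hasDerivAt_pow 2 t).const_mul (L / 2)).mul_const (‖e‖ ^ 2)).congr_deriv ?_
      simp only [Nat.cast_ofNat, Nat.add_one_sub_one, pow_one]
      ring
    exact ((hf _).hasDerivAt_comp_add_smul.sub hlin).sub hsq
  have hanti : AntitoneOn ψ (Icc 0 1) := by
    refine antitoneOn_of_hasDerivWithinAt_nonpos (convex_Icc 0 1)
      (fun t _ => (hψ t).continuousAt.continuousWithinAt) (fun t _ => (hψ t).hasDerivWithinAt)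
      fun t ht => ?_
    rw [interior_Icc] at ht
    have hbound : ⟪f' (x + t • e) - f' x, e⟫ ≤ L * t * ‖e‖ ^ 2 :=
      calc ⟪f' (x + t • e) - f' x, e⟫ ≤ ‖f' (x + t • e) - f' x‖ * ‖e‖ := real_inner_le_norm _ _
        _ ≤ L * ‖t • e‖ * ‖e‖ := by
          gcongr
          simpa using hlip (x + t • e) x
        _ = L * t * ‖e‖ ^ 2 := by
          rw [norm_smul, Real.norm_of_nonneg ht.1.le]
          ring
    rw [inner_sub_left] at hbound
    linarith
  have h01 := hanti (left_mem_Icc.mpr zero_le_one) (right_mem_Icc.mpr zero_le_one) zero_le_one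
  simp only [ψ, e, one_smul, add_sub_cancel, zero_smul, add_zero] at h01
  linarith

lemma ConvexOn.neg_half_mul_sq_le_inner_gradient_sub (hf : ConvexOn ℝ univ f) {f' : E → E}
    {L : ℝ} (hgrad : ∀ x, HasGradientAt f (f' x) x)
    (hlip : ∀ x y, ‖f' x - f' y‖ ≤ L * ‖x - y‖) (x y z : E) :
    -(L / 2) * ‖y - x‖ ^ 2 ≤ ⟪f' x - f' z, y - z⟫ := by
  have hxz := hf.add_inner_sub_le_of_hasGradientAt (hgrad x) z
  have hzy := hf.add_inner_sub_le_of_hasGradientAt (hgrad z) y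
  have hxy := le_add_inner_sub_add_sq_of_lipschitz_gradient hgrad hlip x y
  have hsplit : ⟪f' x - f' z, y - z⟫ = ⟪f' x, y - x⟫ - ⟪f' x, z - x⟫ - ⟪f' z, y - z⟫ := by
    rw [inner_sub_left, ← inner_sub_right, sub_sub_sub_cancel_right]
  linarith

end Gradient

section Subgradient

variable {E : Type*} [NormedAddCommGroup E] [InnerProductSpace ℝ E]

def HasSubgradientAt (g : E → ℝ) (u x : E) : Prop :=
  ∀ x', g x' ≥ g x + ⟪u, x' - x⟫

lemma HasSubgradientAt.inner_sub_nonneg {g : E → ℝ} {u v x y : E}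
    (hu : HasSubgradientAt g u x) (hv : HasSubgradientAt g v y) :
    0 ≤ ⟪u - v, x - y⟫ := by
  have hux := hu y
  have hvy := hv x
  rw [← neg_sub x y, inner_neg_right] at hux
  rw [inner_sub_left]
  linarith

end Subgradient

section QuadraticForm

variable {E : Type*} [NormedAddCommGroup E] [InnerProductSpace ℝ E]

lemma exists_lt_forall_mul_sq_norm_le_inner_map_self [FiniteDimensional ℝ E] (P : E →L[ℝ] E)
    {a : ℝ} (hP : ∀ v ≠ 0, a * ‖v‖ ^ 2 < ⟪v, P v⟫) :
    ∃ c, a < c ∧ ∀ v, c * ‖v‖ ^ 2 ≤ ⟪v, P v⟫ := by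
  obtain ⟨c, hac, hc⟩ := (isCompact_sphere (0 : E) 1).exists_forall_le'
    (f := fun v => ⟪v, P v⟫) (continuous_id.inner P.continuous).continuousOn fun v hv => by
      simpa [mem_sphere_zero_iff_norm.mp hv] using hP v (ne_zero_of_mem_unit_sphere ⟨v, hv⟩)
  refine ⟨c, hac, fun v => ?_⟩
  rcases eq_or_ne v 0 with rfl | hv
  · simp
  have hnorm : 0 < ‖v‖ := norm_pos_iff.mpr hv
  have hcv := hc (‖v‖⁻¹ • v) (by simp [norm_smul, hnorm.ne'])
  rw [map_smul, real_inner_smul_left, real_inner_smul_right, ← mul_assoc, ← sq, inv_pow,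
    le_inv_mul_iff₀ (by positivity)] at hcv
  linarith

lemma inner_map_sub_self_sub {P : E →L[ℝ] E} (hP : (P : E →ₗ[ℝ] E).IsSymmetric) (x y : E) :
    ⟪x - y, P (x - y)⟫ = ⟪x, P x⟫ - 2 * ⟪P y, x⟫ + ⟪y, P y⟫ := by
  have hsymm : ⟪P y, x⟫ = ⟪y, P x⟫ := hP y x
  rw [map_sub, inner_sub_left, inner_sub_right, inner_sub_right, ← hsymm,
    real_inner_comm x (P y)]
  ring

end QuadraticForm

lemma norm_le_add_one_add_div_of_mul_sq_norm_sub_le {F : Type*} [SeminormedAddCommGroup F]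
    {c V : ℝ} (hc : 0 < c) {v w : F} (h : c * ‖v - w‖ ^ 2 ≤ V) :
    ‖v‖ ≤ ‖w‖ + 1 + V / c := by
  have hsq : ‖v - w‖ ^ 2 ≤ V / c := by rwa [le_div_iff₀' hc]
  nlinarith [norm_le_norm_sub_add v w, sq_nonneg (‖v - w‖ - 1)]

section LinearizedALM

variable {E H : Type*} [NormedAddCommGroup E] [InnerProductSpace ℝ E] [CompleteSpace E]
  [NormedAddCommGroup H] [InnerProductSpace ℝ H] [CompleteSpace H]
  {A : E →L[ℝ] H} {b : H} {f g : E → ℝ} {f' : E → E} {L β γ : ℝ} {P : E →L[ℝ] E}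
  {u x₀ x₁ xs : E} {l₀ l₁ ls : H}

lemma linearizedALM_inner_bound (hf : ConvexOn ℝ univ f)
    (hgrad : ∀ x, HasGradientAt f (f' x) x) (hlip : ∀ x y, ‖f' x - f' y‖ ≤ L * ‖x - y‖)
    (hu : HasSubgradientAt g u x₁)
    (hopt : f' x₀ + u - A.adjoint l₀ + β • A.adjoint (A x₁ - b) + P (x₁ - x₀) = 0)
    (hfeas : A xs = b) (hkkt : HasSubgradientAt g (A.adjoint ls - f' xs) xs) :
    -(L / 2) * ‖x₁ - x₀‖ ^ 2
      ≤ ⟪l₀ - ls, A x₁ - b⟫ - β * ‖A x₁ - b‖ ^ 2 - ⟪P (x₁ - x₀), x₁ - xs⟫ := by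
  have hAd : A (x₁ - xs) = A x₁ - b := by rw [map_sub, hfeas]
  calc -(L / 2) * ‖x₁ - x₀‖ ^ 2
      ≤ ⟪u - (A.adjoint ls - f' xs), x₁ - xs⟫ + ⟪f' x₀ - f' xs, x₁ - xs⟫ := by
        linarith [hu.inner_sub_nonneg hkkt,
          hf.neg_half_mul_sq_le_inner_gradient_sub hgrad hlip x₀ x₁ xs]
    _ = ⟪A.adjoint l₀ - A.adjoint ls - β • A.adjoint (A x₁ - b) - P (x₁ - x₀), x₁ - xs⟫ := by
        rw [← inner_add_left]
        congr 1
        linear_combination (norm := module) hopt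
    _ = ⟪l₀ - ls, A x₁ - b⟫ - β * ‖A x₁ - b‖ ^ 2 - ⟪P (x₁ - x₀), x₁ - xs⟫ := by
        rw [inner_sub_left, inner_sub_left, inner_sub_left, real_inner_smul_left,
          ContinuousLinearMap.adjoint_inner_left, ContinuousLinearMap.adjoint_inner_left,
          ContinuousLinearMap.adjoint_inner_left, hAd, real_inner_self_eq_norm_sq, inner_sub_left]

lemma linearizedALM_step_le (hf : ConvexOn ℝ univ f)
    (hgrad : ∀ x, HasGradientAt f (f' x) x) (hlip : ∀ x y, ‖f' x - f' y‖ ≤ L * ‖x - y‖)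
    (hγ : 0 < γ) (hP : (P : E →ₗ[ℝ] E).IsSymmetric)
    (hu : HasSubgradientAt g u x₁)
    (hopt : f' x₀ + u - A.adjoint l₀ + β • A.adjoint (A x₁ - b) + P (x₁ - x₀) = 0)
    (hlam : l₁ = l₀ - γ • (A x₁ - b))
    (hfeas : A xs = b) (hkkt : HasSubgradientAt g (A.adjoint ls - f' xs) xs) :
    ⟪x₁ - xs, P (x₁ - xs)⟫ + (⟪x₁ - x₀, P (x₁ - x₀)⟫ - L * ‖x₁ - x₀‖ ^ 2)
        + (1 / γ) * ‖l₁ - ls‖ ^ 2 + (1 / γ) * (2 * β / γ - 1) * ‖l₁ - l₀‖ ^ 2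
      ≤ ⟪x₀ - xs, P (x₀ - xs)⟫ + (1 / γ) * ‖l₀ - ls‖ ^ 2 := by
  have hbound := linearizedALM_inner_bound hf hgrad hlip hu hopt hfeas hkkt
  set r := A x₁ - b
  have hx : ⟪x₀ - xs, P (x₀ - xs)⟫
      = ⟪x₁ - xs, P (x₁ - xs)⟫ - 2 * ⟪P (x₁ - x₀), x₁ - xs⟫ + ⟪x₁ - x₀, P (x₁ - x₀)⟫ := by
    rw [← inner_map_sub_self_sub hP, sub_sub_sub_cancel_left]
  have hl₁ : ‖l₁ - ls‖ ^ 2 = ‖l₀ - ls‖ ^ 2 - 2 * γ * ⟪l₀ - ls, r⟫ + γ ^ 2 * ‖r‖ ^ 2 := by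
    rw [hlam, sub_right_comm, norm_sub_sq_real, real_inner_smul_right, norm_smul, mul_pow,
      Real.norm_eq_abs, sq_abs]
    ring
  have hl₁₀ : ‖l₁ - l₀‖ ^ 2 = γ ^ 2 * ‖r‖ ^ 2 := by
    rw [hlam, sub_sub_cancel_left, norm_neg, norm_smul, mul_pow, Real.norm_eq_abs, sq_abs]
  rw [hx, hl₁, hl₁₀]
  field_simp
  linear_combination (2 * γ) * hbound

end LinearizedALM

theorem stmt_5_general {E H : Type*}
    [NormedAddCommGroup E] [InnerProductSpace ℝ E] [FiniteDimensional ℝ E]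
    [NormedAddCommGroup H] [InnerProductSpace ℝ H] [FiniteDimensional ℝ H]
    (A : E →L[ℝ] H) (b : H)
    (f : E → ℝ) (f' : E → E) (Lf : ℝ) (hLf : 0 ≤ Lf)
    (hfconv : ConvexOn ℝ Set.univ f)
    (hgrad : ∀ x : E, HasGradientAt f (f' x) x)
    (hlip : ∀ x x' : E, ‖f' x - f' x'‖ ≤ Lf * ‖x - x'‖)
    (g : E → ℝ)
    (β γ : ℝ) (hγ0 : 0 < γ) (hγ2 : γ < 2 * β)
    (P : E →L[ℝ] E) (hP : IsSelfAdjoint P)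
    (hPpd : ∀ v : E, v ≠ 0 → Lf * ‖v‖ ^ 2 < ⟪v, P v⟫)
    (x : ℕ → E) (lam : ℕ → H)
    (hopt : ∀ k : ℕ, 1 ≤ k → ∃ u : E,
      (∀ x' : E, g x' ≥ g (x (k+1)) + ⟪u, x' - x (k+1)⟫) ∧
      f' (x k) + u - (ContinuousLinearMap.adjoint A) (lam k)
        + β • (ContinuousLinearMap.adjoint A) (A (x (k+1)) - b)
        + P (x (k+1) - x k) = 0)
    (hlam : ∀ k : ℕ, 1 ≤ k → lam (k+1) = lam k - γ • (A (x (k+1)) - b))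
    (xs : E) (ls : H)
    (hfeas : A xs = b)
    (hkkt : ∀ x' : E, g x' ≥ g xs + ⟪(ContinuousLinearMap.adjoint A) ls - f' xs, x' - xs⟫) :
    (∀ k : ℕ, 1 ≤ k →
      ⟪x (k+1) - xs, P (x (k+1) - xs)⟫
          + (⟪x (k+1) - x k, P (x (k+1) - x k)⟫ - Lf * ‖x (k+1) - x k‖ ^ 2)
          + (1 / γ) * ‖lam (k+1) - ls‖ ^ 2
          + (1 / γ) * (2 * β / γ - 1) * ‖lam (k+1) - lam k‖ ^ 2
        ≤ ⟪x k - xs, P (x k - xs)⟫ + (1 / γ) * ‖lam k - ls‖ ^ 2) ∧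
    (∀ k : ℕ, 1 ≤ k →
      ⟪x (k+1) - xs, P (x (k+1) - xs)⟫ + (1 / γ) * ‖lam (k+1) - ls‖ ^ 2
        ≤ ⟪x k - xs, P (x k - xs)⟫ + (1 / γ) * ‖lam k - ls‖ ^ 2) ∧
    (∃ M : ℝ, ∀ k : ℕ, 1 ≤ k → ‖x k‖ + ‖lam k‖ ≤ M) := by
  have step := fun k (hk : 1 ≤ k) => (hopt k hk).elim fun _ hu =>
    linearizedALM_step_le hfconv hgrad hlip hγ0 hP.isSymmetric hu.1 hu.2 (hlam k hk) hfeas hkkt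
  obtain ⟨c, hLc, hc⟩ := exists_lt_forall_mul_sq_norm_le_inner_map_self P hPpd
  have descent : ∀ k, 1 ≤ k →
      ⟪x (k+1) - xs, P (x (k+1) - xs)⟫ + (1 / γ) * ‖lam (k+1) - ls‖ ^ 2
        ≤ ⟪x k - xs, P (x k - xs)⟫ + (1 / γ) * ‖lam k - ls‖ ^ 2 := by
    intro k hk
    have hPL : Lf * ‖x (k+1) - x k‖ ^ 2 ≤ ⟪x (k+1) - x k, P (x (k+1) - x k)⟫ := by
      nlinarith [hc (x (k+1) - x k), sq_nonneg ‖x (k+1) - x k‖]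
    have hγβ : 0 ≤ (1 / γ) * (2 * β / γ - 1) := by
      have : 1 < 2 * β / γ := (one_lt_div hγ0).mpr hγ2
      exact mul_nonneg (by positivity) (by linarith)
    nlinarith [step k hk, sq_nonneg ‖lam (k+1) - lam k‖]
  refine ⟨step, descent, ?_⟩
  set V₁ := ⟪x 1 - xs, P (x 1 - xs)⟫ + (1 / γ) * ‖lam 1 - ls‖ ^ 2
  refine ⟨(‖xs‖ + 1 + V₁ / c) + (‖ls‖ + 1 + V₁ / (1 / γ)), fun k hk => ?_⟩
  have hV : ⟪x k - xs, P (x k - xs)⟫ + (1 / γ) * ‖lam k - ls‖ ^ 2 ≤ V₁ :=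
    antitoneOn_nat_Ici_of_succ_le
      (f := fun k => ⟪x k - xs, P (x k - xs)⟫ + (1 / γ) * ‖lam k - ls‖ ^ 2) descent
      (le_refl 1) hk hk
  have hxk := hc (x k - xs)
  have hPxk : 0 ≤ ⟪x k - xs, P (x k - xs)⟫ := by nlinarith [sq_nonneg ‖x k - xs‖]
  have hlamk : 0 ≤ (1 / γ) * ‖lam k - ls‖ ^ 2 := by positivity
  exact add_le_add
    (norm_le_add_one_add_div_of_mul_sq_norm_sub_le (hLf.trans_lt hLc) (by linarith))
    (norm_le_add_one_add_div_of_mul_sq_norm_sub_le (by positivity) (by linarith))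

/-- Per-iteration monotonicity of the linearized ALM with constant parameters;
in particular `‖xᵏ − x*‖²_P + (1/γ)‖λᵏ − λ*‖²` is nonincreasing and the iterates are bounded. -/
theorem stmt_5 {E H : Type*}
    [NormedAddCommGroup E] [InnerProductSpace ℝ E] [FiniteDimensional ℝ E]
    [NormedAddCommGroup H] [InnerProductSpace ℝ H] [FiniteDimensional ℝ H]
    (A : E →L[ℝ] H) (b : H)
    (f : E → ℝ) (f' : E → E) (Lf : ℝ) (hLf : 0 ≤ Lf)
    (hfconv : ConvexOn ℝ Set.univ f)
    (hgrad : ∀ x : E, HasGradientAt f (f' x) x)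
    (hlip : ∀ x x' : E, ‖f' x - f' x'‖ ≤ Lf * ‖x - x'‖)
    (g : E → ℝ) (hgconv : ConvexOn ℝ Set.univ g)
    (β γ : ℝ) (hβ : 0 < β) (hγ0 : 0 < γ) (hγ2 : γ < 2 * β)
    (P : E →L[ℝ] E) (hP : IsSelfAdjoint P)
    (hPpd : ∀ v : E, v ≠ 0 → Lf * ‖v‖ ^ 2 < ⟪v, P v⟫)
    (x : ℕ → E) (lam : ℕ → H)
    (hopt : ∀ k : ℕ, 1 ≤ k → ∃ u : E,
      (∀ x' : E, g x' ≥ g (x (k+1)) + ⟪u, x' - x (k+1)⟫) ∧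
      f' (x k) + u - (ContinuousLinearMap.adjoint A) (lam k)
        + β • (ContinuousLinearMap.adjoint A) (A (x (k+1)) - b)
        + P (x (k+1) - x k) = 0)
    (hlam : ∀ k : ℕ, 1 ≤ k → lam (k+1) = lam k - γ • (A (x (k+1)) - b))
    (xs : E) (ls : H)
    (hfeas : A xs = b)
    (hkkt : ∀ x' : E, g x' ≥ g xs + ⟪(ContinuousLinearMap.adjoint A) ls - f' xs, x' - xs⟫) :
    (∀ k : ℕ, 1 ≤ k →
      ⟪x (k+1) - xs, P (x (k+1) - xs)⟫
          + (⟪x (k+1) - x k, P (x (k+1) - x k)⟫ - Lf * ‖x (k+1) - x k‖ ^ 2)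
          + (1 / γ) * ‖lam (k+1) - ls‖ ^ 2
          + (1 / γ) * (2 * β / γ - 1) * ‖lam (k+1) - lam k‖ ^ 2
        ≤ ⟪x k - xs, P (x k - xs)⟫ + (1 / γ) * ‖lam k - ls‖ ^ 2) ∧
    (∀ k : ℕ, 1 ≤ k →
      ⟪x (k+1) - xs, P (x (k+1) - xs)⟫ + (1 / γ) * ‖lam (k+1) - ls‖ ^ 2
        ≤ ⟪x k - xs, P (x k - xs)⟫ + (1 / γ) * ‖lam k - ls‖ ^ 2) ∧
    (∃ M : ℝ, ∀ k : ℕ, 1 ≤ k → ‖x k‖ + ‖lam k‖ ≤ M) :=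
  stmt_5_general A b f f' Lf hLf hfconv hgrad hlip g β γ hγ0 hγ2 P hP hPpd x lam hopt hlam xs ls
    hfeas hkkt
end

section
/- (Key telescoped bound for accelerated linearized ALM.) Let γ > 0 and η ≥ 2 L_f. Let (xᵏ)_{k≥1}, (x̄ᵏ)_{k≥1} ⊂ E and (λᵏ)_{k≥1} ⊂ H satisfy x̄¹ = x¹ and, for each k ≥ 1 with α_k = 2/(k+1), γ_k = kγ, β_k ≥ γ_k/2, and Pᵏ = (η/k)·I: x̂ᵏ = (1−α_k)x̄ᵏ + α_k xᵏ; there is a subgradient uᵏ of g at x^{k+1} with ∇f(x̂ᵏ) + uᵏ − A*λᵏ + β_k A*(A x^{k+1} − b) + (η/k)(x^{k+1} − xᵏ) = 0; x̄^{k+1} = (1−α_k)x̄ᵏ + α_k x^{k+1}; λ^{k+1} = λᵏ − γ_k(A x^{k+1} − b). Then for every t ≥ 1, every x ∈ E with A x = b, and every λ ∈ H: t(t+1)·[F(x̄^{t+1}) − F(x) − ⟨λ, A x̄^{t+1} − b⟩] ≤ η‖x¹ − x‖² + (1/γ)‖λ¹ − λ‖². -/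
/-!
Along a step, `f + g` at the averaged point `x̄ᵏ⁺¹` is bounded by convexity of `g` (through the
subgradient `uᵏ`) and, for `f`, by the descent lemma at the extrapolated point `x̂ᵏ` followed by
the gradient inequality at `x̂ᵏ`. Pairing the optimality condition with `xᵏ⁺¹ - x` (where
`A(xᵏ⁺¹ - x) = Axᵏ⁺¹ - b`) turns this into a bound for the Lagrangian gap
`G(y) = F y - F x - ⟪λ, A y - b⟫`. Multiplying by `k(k+1)`, the multiplier terms cancel against the
expansion of `‖λᵏ⁺¹ - λ‖²/γ`, and `β_k ≥ kγ/2`, `η ≥ 2L_f` absorb the leftover squares, so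
`Φ_k = (k-1)k G(x̄ᵏ) + η‖xᵏ - x‖² + ‖λᵏ - λ‖²/γ` is nonincreasing; since `Φ₁` has no gap term,
the bound follows by telescoping.
-/

open scoped RealInnerProductSpace
open AffineMap

section Convex

variable {E : Type*} [NormedAddCommGroup E] [InnerProductSpace ℝ E]

theorem ConvexOn.accelerated_step_le_of_subgradient {g : E → ℝ} (hg : ConvexOn ℝ Set.univ g)
    {u v' : E} (hu : ∀ x, g x ≥ g v' + ⟪u, x - v'⟫) {α : ℝ} (hα₀ : 0 ≤ α) (hα₁ : α ≤ 1)
    (y z : E) :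
    g ((1 - α) • y + α • v') ≤ (1 - α) * g y + α * g z + α * ⟪u, v' - z⟫ := by
  have hcvx := hg.2 (Set.mem_univ y) (Set.mem_univ v') (sub_nonneg.mpr hα₁) hα₀ (by ring)
  have hz := hu z
  rw [← neg_sub, inner_neg_right] at hz
  simp only [smul_eq_mul] at hcvx
  nlinarith [mul_le_mul_of_nonneg_left hz hα₀]

variable [CompleteSpace E] {f : E → ℝ} {f' : E → E}

theorem HasGradientAt.hasDerivAt_comp_lineMap_s8 {g p z : E} {t : ℝ}
    (hf : HasGradientAt f g (lineMap p z t)) :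
    HasDerivAt (f ∘ lineMap p z) ⟪g, z - p⟫ t := by
  simpa using (hasGradientAt_iff_hasFDerivAt.mp hf).comp_hasDerivAt t hasDerivAt_lineMap

theorem ConvexOn.add_inner_gradient_le (hf : ConvexOn ℝ Set.univ f)
    (hgrad : ∀ x, HasGradientAt f (f' x) x) (p z : E) :
    f p + ⟪f' p, z - p⟫ ≤ f z := by
  have hd : HasDerivAt (f ∘ lineMap p z) ⟪f' p, z - p⟫ (0 : ℝ) :=
    HasGradientAt.hasDerivAt_comp_lineMap_s8 (by rw [lineMap_apply_zero]; exact hgrad p)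
  have := (hf.comp_affineMap (lineMap p z)).le_slope_of_hasDerivAt trivial trivial zero_lt_one hd
  simp only [slope_def_field, Function.comp_apply, lineMap_apply_one, lineMap_apply_zero,
    sub_zero, div_one] at this
  linarith

theorem le_add_inner_gradient_add_sq (hgrad : ∀ x, HasGradientAt f (f' x) x) {L : ℝ}
    (hlip : ∀ x y, ‖f' x - f' y‖ ≤ L * ‖x - y‖) (p z : E) :
    f z ≤ f p + ⟪f' p, z - p⟫ + L / 2 * ‖z - p‖ ^ 2 := by
  set ψ : ℝ → ℝ := fun t => f (lineMap p z t) - t * ⟪f' p, z - p⟫ - t ^ 2 * (L / 2 * ‖z - p‖ ^ 2)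
  have hψ : ∀ t, HasDerivAt ψ (⟪f' (lineMap p z t) - f' p, z - p⟫ - t * (L * ‖z - p‖ ^ 2)) t := by
    intro t
    refine (((hgrad _).hasDerivAt_comp_lineMap_s8.sub ((hasDerivAt_id t).mul_const _)).sub
      ((hasDerivAt_pow 2 t).mul_const (L / 2 * ‖z - p‖ ^ 2))).congr_deriv ?_
    rw [inner_sub_left]
    ring
  have hanti : AntitoneOn ψ (Set.Icc 0 1) := by
    refine antitoneOn_of_hasDerivWithinAt_nonpos (convex_Icc 0 1)
      (HasDerivAt.continuousOn fun t _ => hψ t) (fun t _ => (hψ t).hasDerivWithinAt) ?_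
    intro t ht
    rw [interior_Icc] at ht
    have : ⟪f' (lineMap p z t) - f' p, z - p⟫ ≤ t * (L * ‖z - p‖ ^ 2) :=
      calc ⟪f' (lineMap p z t) - f' p, z - p⟫
          ≤ ‖f' (lineMap p z t) - f' p‖ * ‖z - p‖ := real_inner_le_norm _ _
        _ ≤ L * ‖lineMap p z t - p‖ * ‖z - p‖ := by gcongr; exact hlip _ _
        _ = t * (L * ‖z - p‖ ^ 2) := by
          rw [← vsub_eq_sub, lineMap_vsub_left, norm_smul, Real.norm_of_nonneg ht.1.le, vsub_eq_sub]
          ring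
    linarith
  have := hanti (Set.left_mem_Icc.mpr zero_le_one) (Set.right_mem_Icc.mpr zero_le_one) zero_le_one
  simp only [ψ, lineMap_apply_zero, lineMap_apply_one] at this
  linarith

theorem ConvexOn.accelerated_step_le_of_gradient (hf : ConvexOn ℝ Set.univ f)
    (hgrad : ∀ x, HasGradientAt f (f' x) x) {L : ℝ}
    (hlip : ∀ x y, ‖f' x - f' y‖ ≤ L * ‖x - y‖) {α : ℝ} (hα₀ : 0 ≤ α) (hα₁ : α ≤ 1)
    (y v v' z : E) :
    f ((1 - α) • y + α • v') ≤ (1 - α) * f y + α * f z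
      + α * ⟪f' ((1 - α) • y + α • v), v' - z⟫ + L / 2 * α ^ 2 * ‖v' - v‖ ^ 2 := by
  set w := (1 - α) • y + α • v
  have hdescent := le_add_inner_gradient_add_sq hgrad hlip w ((1 - α) • y + α • v')
  have hy := hf.add_inner_gradient_le hgrad w y
  have hz := hf.add_inner_gradient_le hgrad w z
  have hstep : (1 - α) • y + α • v' - w = α • (v' - v) := by simp only [w]; module
  have hcombo : (1 - α) • (y - w) + α • (z - w) = α • (z - v) := by simp only [w]; module
  have hinner : (1 - α) * ⟪f' w, y - w⟫ + α * ⟪f' w, z - w⟫ = α * ⟪f' w, z - v⟫ := by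
    rw [← real_inner_smul_right, ← real_inner_smul_right, ← inner_add_right, hcombo,
      real_inner_smul_right]
  rw [hstep, real_inner_smul_right, norm_smul, mul_pow, Real.norm_eq_abs, sq_abs] at hdescent
  have hsplit : ⟪f' w, v' - v⟫ = ⟪f' w, v' - z⟫ + ⟪f' w, z - v⟫ := by
    rw [← inner_add_right, sub_add_sub_cancel]
  nlinarith [mul_le_mul_of_nonneg_left hy (sub_nonneg.mpr hα₁), mul_le_mul_of_nonneg_left hz hα₀]

end Convex

section ALM

variable {E H : Type*} [NormedAddCommGroup E] [InnerProductSpace ℝ E] [CompleteSpace E]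
  [NormedAddCommGroup H] [InnerProductSpace ℝ H] [CompleteSpace H]
  (A : E →L[ℝ] H) (b : H)

def lagrangianGap (F : E → ℝ) (x₀ : E) (μ : H) (y : E) : ℝ :=
  F y - F x₀ - ⟪μ, A y - b⟫

variable {A b} {f g : E → ℝ} {f' : E → E} {L : ℝ}

theorem lagrangianGap_step (hf : ConvexOn ℝ Set.univ f) (hgrad : ∀ x, HasGradientAt f (f' x) x)
    (hlip : ∀ x y, ‖f' x - f' y‖ ≤ L * ‖x - y‖) (hg : ConvexOn ℝ Set.univ g)
    {α β τ : ℝ} (hα₀ : 0 ≤ α) (hα₁ : α ≤ 1) {y v v' u x₀ : E} {l μ : H}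
    (hu : ∀ x, g x ≥ g v' + ⟪u, x - v'⟫)
    (hopt : f' ((1 - α) • y + α • v) + u - A.adjoint l + β • A.adjoint (A v' - b)
      + τ • (v' - v) = 0)
    (hx₀ : A x₀ = b) :
    lagrangianGap A b (f + g) x₀ μ ((1 - α) • y + α • v')
      ≤ (1 - α) * lagrangianGap A b (f + g) x₀ μ y
        + α * (⟪l - μ, A v' - b⟫ - β * ‖A v' - b‖ ^ 2
          - τ / 2 * (‖v' - x₀‖ ^ 2 - ‖v - x₀‖ ^ 2 + ‖v' - v‖ ^ 2))
        + L / 2 * α ^ 2 * ‖v' - v‖ ^ 2 := by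
  have hf_step := hf.accelerated_step_le_of_gradient hgrad hlip hα₀ hα₁ y v v' x₀
  have hg_step := hg.accelerated_step_le_of_subgradient hu hα₀ hα₁ y x₀
  set r := A v' - b
  have hresidual : A (v' - x₀) = r := by rw [map_sub, hx₀]
  have hopt_inner : ⟪f' ((1 - α) • y + α • v), v' - x₀⟫ + ⟪u, v' - x₀⟫
      = ⟪l, r⟫ - β * ‖r‖ ^ 2 - τ * ⟪v' - v, v' - x₀⟫ := by
    have := congrArg (⟪·, v' - x₀⟫) hopt
    simp only [inner_add_left, inner_sub_left, real_inner_smul_left, inner_zero_left,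
      ContinuousLinearMap.adjoint_inner_left, hresidual, real_inner_self_eq_norm_sq] at this
    rw [inner_sub_left]
    linarith
  have hthree_point : ⟪v' - v, v' - x₀⟫ = (‖v' - x₀‖ ^ 2 - ‖v - x₀‖ ^ 2 + ‖v' - v‖ ^ 2) / 2 := by
    rw [← sub_sub_sub_cancel_right v' v x₀, norm_sub_sq_real (v' - x₀), inner_sub_left,
      real_inner_self_eq_norm_sq, real_inner_comm]
    ring
  have hA : A ((1 - α) • y + α • v') - b = (1 - α) • (A y - b) + α • (A v' - b) := by
    simp only [map_add, map_smul]; module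
  simp only [lagrangianGap, Pi.add_apply, hA, inner_add_right, real_inner_smul_right,
    inner_sub_left]
  rw [hthree_point] at hopt_inner
  nlinarith [hopt_inner]

theorem lagrangianGap_potential_step (hf : ConvexOn ℝ Set.univ f)
    (hgrad : ∀ x, HasGradientAt f (f' x) x) (hlip : ∀ x y, ‖f' x - f' y‖ ≤ L * ‖x - y‖)
    (hL : 0 ≤ L) (hg : ConvexOn ℝ Set.univ g) {κ γ η β : ℝ} (hκ : 1 ≤ κ) (hγ : 0 < γ)
    (hη : 2 * L ≤ η) (hβ : κ * γ / 2 ≤ β) {y y' v v' u x₀ : E} {l l' μ : H}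
    (hu : ∀ x, g x ≥ g v' + ⟪u, x - v'⟫)
    (hopt : f' ((1 - 2 / (κ + 1)) • y + (2 / (κ + 1)) • v) + u - A.adjoint l
      + β • A.adjoint (A v' - b) + (η / κ) • (v' - v) = 0)
    (hy' : y' = (1 - 2 / (κ + 1)) • y + (2 / (κ + 1)) • v')
    (hl' : l' = l - (κ * γ) • (A v' - b)) (hx₀ : A x₀ = b) :
    κ * (κ + 1) * lagrangianGap A b (f + g) x₀ μ y' + η * ‖v' - x₀‖ ^ 2
        + 1 / γ * ‖l' - μ‖ ^ 2
      ≤ (κ - 1) * κ * lagrangianGap A b (f + g) x₀ μ y + η * ‖v - x₀‖ ^ 2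
        + 1 / γ * ‖l - μ‖ ^ 2 := by
  have hκ₀ : 0 < κ := by linarith
  have hα₀ : 0 ≤ 2 / (κ + 1) := by positivity
  have hα₁ : 2 / (κ + 1) ≤ 1 := by rw [div_le_one (by linarith)]; linarith
  have hgap := lagrangianGap_step hf hgrad hlip hg hα₀ hα₁ hu hopt hx₀ (μ := μ)
  rw [← hy'] at hgap
  set r := A v' - b
  have hmultiplier : 1 / γ * ‖l' - μ‖ ^ 2
      = 1 / γ * ‖l - μ‖ ^ 2 - 2 * κ * ⟪l - μ, r⟫ + κ ^ 2 * γ * ‖r‖ ^ 2 := by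
    rw [hl', sub_right_comm, norm_sub_sq_real, real_inner_smul_right, norm_smul,
      Real.norm_of_nonneg (by positivity)]
    field_simp
  have hscaled := mul_le_mul_of_nonneg_left hgap (by positivity : 0 ≤ κ * (κ + 1))
  have hexpand : κ * (κ + 1) * ((1 - 2 / (κ + 1)) * lagrangianGap A b (f + g) x₀ μ y
      + 2 / (κ + 1) * (⟪l - μ, r⟫ - β * ‖r‖ ^ 2
        - η / κ / 2 * (‖v' - x₀‖ ^ 2 - ‖v - x₀‖ ^ 2 + ‖v' - v‖ ^ 2))
      + L / 2 * (2 / (κ + 1)) ^ 2 * ‖v' - v‖ ^ 2)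
      = (κ - 1) * κ * lagrangianGap A b (f + g) x₀ μ y + 2 * κ * ⟪l - μ, r⟫
        - 2 * κ * β * ‖r‖ ^ 2 - η * (‖v' - x₀‖ ^ 2 - ‖v - x₀‖ ^ 2 + ‖v' - v‖ ^ 2)
        + 2 * κ * L / (κ + 1) * ‖v' - v‖ ^ 2 := by
    field_simp
    ring
  have hpenalty : κ ^ 2 * γ * ‖r‖ ^ 2 ≤ 2 * κ * β * ‖r‖ ^ 2 := by
    have : κ ^ 2 * γ ≤ 2 * κ * β := by nlinarith
    gcongr
  have hsmooth : 2 * κ * L / (κ + 1) * ‖v' - v‖ ^ 2 ≤ η * ‖v' - v‖ ^ 2 := by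
    have : 2 * κ * L / (κ + 1) ≤ η := by rw [div_le_iff₀ (by linarith)]; nlinarith
    gcongr
  linarith

end ALM

theorem stmt_8_general {E H : Type*}
    [NormedAddCommGroup E] [InnerProductSpace ℝ E] [FiniteDimensional ℝ E]
    [NormedAddCommGroup H] [InnerProductSpace ℝ H] [FiniteDimensional ℝ H]
    (A : E →L[ℝ] H) (b : H)
    (f : E → ℝ) (f' : E → E) (Lf : ℝ) (hLf : 0 ≤ Lf)
    (hfconv : ConvexOn ℝ Set.univ f)
    (hgrad : ∀ x : E, HasGradientAt f (f' x) x)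
    (hlip : ∀ x x' : E, ‖f' x - f' x'‖ ≤ Lf * ‖x - x'‖)
    (g : E → ℝ) (hgconv : ConvexOn ℝ Set.univ g)
    (γ η : ℝ) (hγ : 0 < γ) (hη : 2 * Lf ≤ η)
    (βk : ℕ → ℝ) (hβk : ∀ k : ℕ, 1 ≤ k → (k : ℝ) * γ / 2 ≤ βk k)
    (x xb : ℕ → E) (lam : ℕ → H)
    (hopt : ∀ k : ℕ, 1 ≤ k → ∃ u : E,
      (∀ x' : E, g x' ≥ g (x (k+1)) + ⟪u, x' - x (k+1)⟫) ∧
      f' ((1 - 2 / ((k : ℝ) + 1)) • xb k + (2 / ((k : ℝ) + 1)) • x k) + u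
        - (ContinuousLinearMap.adjoint A) (lam k)
        + βk k • (ContinuousLinearMap.adjoint A) (A (x (k+1)) - b)
        + (η / (k : ℝ)) • (x (k+1) - x k) = 0)
    (hxb : ∀ k : ℕ, 1 ≤ k →
      xb (k+1) = (1 - 2 / ((k : ℝ) + 1)) • xb k + (2 / ((k : ℝ) + 1)) • x (k+1))
    (hlam : ∀ k : ℕ, 1 ≤ k → lam (k+1) = lam k - ((k : ℝ) * γ) • (A (x (k+1)) - b)) :
    ∀ t : ℕ, 1 ≤ t → ∀ x0 : E, A x0 = b → ∀ lam0 : H,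
      (t : ℝ) * ((t : ℝ) + 1)
          * ((f (xb (t+1)) + g (xb (t+1))) - (f x0 + g x0) - ⟪lam0, A (xb (t+1)) - b⟫)
        ≤ η * ‖x 1 - x0‖ ^ 2 + (1 / γ) * ‖lam 1 - lam0‖ ^ 2 := by
  intro t _ x0 hx0 lam0
  set G := lagrangianGap A b (f + g) x0 lam0
  set Φ : ℕ → ℝ := fun n =>
    n * (n + 1) * G (xb (n + 1)) + η * ‖x (n + 1) - x0‖ ^ 2 + 1 / γ * ‖lam (n + 1) - lam0‖ ^ 2
  have hstep : ∀ n, Φ (n + 1) ≤ Φ n := fun n => by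
    obtain ⟨u, hu, hk⟩ := hopt (n + 1) (by omega)
    have := lagrangianGap_potential_step hfconv hgrad hlip hLf hgconv (by simp) hγ hη
      (hβk (n + 1) (by omega)) hu hk (hxb (n + 1) (by omega)) (hlam (n + 1) (by omega)) hx0
      (μ := lam0)
    simp only [Φ]
    push_cast at this ⊢
    linarith
  calc (t : ℝ) * (t + 1) * G (xb (t + 1))
      ≤ Φ t := by
        have : 0 ≤ η := by linarith
        exact le_add_of_le_of_nonneg (le_add_of_nonneg_right (by positivity)) (by positivity)
    _ ≤ Φ 0 := antitone_nat_of_succ_le hstep (Nat.zero_le t)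
    _ = η * ‖x 1 - x0‖ ^ 2 + 1 / γ * ‖lam 1 - lam0‖ ^ 2 := by simp [Φ]

/-- Key telescoped bound for the accelerated linearized ALM with parameters
`α_k = 2/(k+1)`, `γ_k = kγ`, `β_k ≥ γ_k/2`, `Pᵏ = (η/k)·I`. -/
theorem stmt_8 {E H : Type*}
    [NormedAddCommGroup E] [InnerProductSpace ℝ E] [FiniteDimensional ℝ E]
    [NormedAddCommGroup H] [InnerProductSpace ℝ H] [FiniteDimensional ℝ H]
    (A : E →L[ℝ] H) (b : H)
    (f : E → ℝ) (f' : E → E) (Lf : ℝ) (hLf : 0 ≤ Lf)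
    (hfconv : ConvexOn ℝ Set.univ f)
    (hgrad : ∀ x : E, HasGradientAt f (f' x) x)
    (hlip : ∀ x x' : E, ‖f' x - f' x'‖ ≤ Lf * ‖x - x'‖)
    (g : E → ℝ) (hgconv : ConvexOn ℝ Set.univ g)
    (γ η : ℝ) (hγ : 0 < γ) (hη : 2 * Lf ≤ η)
    (βk : ℕ → ℝ) (hβk : ∀ k : ℕ, 1 ≤ k → (k : ℝ) * γ / 2 ≤ βk k)
    (x xb : ℕ → E) (lam : ℕ → H)
    (hinit : xb 1 = x 1)
    (hopt : ∀ k : ℕ, 1 ≤ k → ∃ u : E,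
      (∀ x' : E, g x' ≥ g (x (k+1)) + ⟪u, x' - x (k+1)⟫) ∧
      f' ((1 - 2 / ((k : ℝ) + 1)) • xb k + (2 / ((k : ℝ) + 1)) • x k) + u
        - (ContinuousLinearMap.adjoint A) (lam k)
        + βk k • (ContinuousLinearMap.adjoint A) (A (x (k+1)) - b)
        + (η / (k : ℝ)) • (x (k+1) - x k) = 0)
    (hxb : ∀ k : ℕ, 1 ≤ k →
      xb (k+1) = (1 - 2 / ((k : ℝ) + 1)) • xb k + (2 / ((k : ℝ) + 1)) • x (k+1))
    (hlam : ∀ k : ℕ, 1 ≤ k → lam (k+1) = lam k - ((k : ℝ) * γ) • (A (x (k+1)) - b)) :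
    ∀ t : ℕ, 1 ≤ t → ∀ x0 : E, A x0 = b → ∀ lam0 : H,
      (t : ℝ) * ((t : ℝ) + 1)
          * ((f (xb (t+1)) + g (xb (t+1))) - (f x0 + g x0) - ⟪lam0, A (xb (t+1)) - b⟫)
        ≤ η * ‖x 1 - x0‖ ^ 2 + (1 / γ) * ‖lam 1 - lam0‖ ^ 2 :=
  stmt_8_general A b f f' Lf hLf hfconv hgrad hlip g hgconv γ η hγ hη βk hβk x xb lam hopt hxb hlam
end

section
/- Let μ_g, μ_h ≥ 0 with μ_g + μ_h > 0, let L_h ≥ μ_h, and let Q be a self-adjoint operator on a finite-dimensional real inner product space with (μ_g + μ_h)/2·I − Q positive semidefinite. Set k₀ = ⌈1 + 2(L_h − μ_h)/(μ_g + μ_h)⌉. Then for every integer k ≥ 1, the operator (k + k₀)(k Q + (L_h + μ_g)·I) − (k + k₀ + 1)((k+1) Q + (L_h − μ_h)·I) is positive semidefinite. -/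
open scoped RealInnerProductSpace

/-!
Writing `q = ⟪v, Q v⟫` and `n = ‖v‖²`, the quadratic form equals
`((k + k₀)(μ_g + μ_h) − (L_h − μ_h)) n − (2k + k₀ + 1) q`. Since `k₀ ≥ 1`, the coefficient of `q`
is negative, so the bound `q ≤ (μ_g + μ_h)/2 · n` reduces the claim to
`2 (L_h − μ_h) ≤ (k₀ − 1)(μ_g + μ_h)`, which is exactly what the choice of `k₀` guarantees.
-/

theorem le_ceil_div_mul {K : Type*} [Field K] [LinearOrder K] [IsStrictOrderedRing K]
    [FloorRing K] {a : K} (b : K) (ha : 0 < a) : b ≤ ⌈b / a⌉ * a :=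
  (div_le_iff₀ ha).1 (Int.le_ceil _)

theorem sub_mul_sub_mul_nonneg_of_le_half_mul {a c k k0 q n : ℝ} (hq : q ≤ a / 2 * n)
    (hn : 0 ≤ n) (hc : 2 * c ≤ (k0 - 1) * a) (hk : 0 ≤ 2 * k + k0 + 1) :
    0 ≤ ((k + k0) * a - c) * n - (2 * k + k0 + 1) * q :=
  calc 0 ≤ ((k0 - 1) * a - 2 * c) / 2 * n := mul_nonneg (by linarith) hn
    _ = ((k + k0) * a - c) * n - (2 * k + k0 + 1) * (a / 2 * n) := by ring
    _ ≤ ((k + k0) * a - c) * n - (2 * k + k0 + 1) * q := by gcongr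

theorem stmt_12_general {Z : Type*}
    [NormedAddCommGroup Z] [InnerProductSpace ℝ Z]
    (μg μh Lh : ℝ) (hμ : 0 < μg + μh) (hL : μh ≤ Lh)
    (Q : Z →L[ℝ] Z)
    (hQup : ∀ v : Z, ⟪v, Q v⟫ ≤ (μg + μh) / 2 * ‖v‖ ^ 2)
    (k0 : ℤ) (hk0 : k0 = ⌈(1 : ℝ) + 2 * (Lh - μh) / (μg + μh)⌉) :
    ∀ k : ℕ, 1 ≤ k → ∀ v : Z,
      0 ≤ ((k : ℝ) + (k0 : ℝ)) * ((k : ℝ) * ⟪v, Q v⟫ + (Lh + μg) * ‖v‖ ^ 2)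
          - ((k : ℝ) + (k0 : ℝ) + 1) * (((k : ℝ) + 1) * ⟪v, Q v⟫ + (Lh - μh) * ‖v‖ ^ 2) := by
  intro k _ v
  have hk0_sub : 2 * (Lh - μh) ≤ ((k0 : ℝ) - 1) * (μg + μh) := by
    have hceil : (k0 : ℝ) - 1 = ⌈2 * (Lh - μh) / (μg + μh)⌉ := by
      rw [hk0, Int.ceil_one_add]; push_cast; ring
    rw [hceil]
    exact le_ceil_div_mul _ hμ
  have hk0_ge : 0 ≤ (k0 : ℝ) - 1 :=
    nonneg_of_mul_nonneg_left (by linarith) hμ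
  have key := sub_mul_sub_mul_nonneg_of_le_half_mul (k := k) (hQup v) (sq_nonneg ‖v‖)
    hk0_sub (by linarith [(k.cast_nonneg : (0 : ℝ) ≤ k)])
  linarith

/-- With `k₀ = ⌈1 + 2(L_h − μ_h)/(μ_g + μ_h)⌉` and `Q ⪯ ((μ_g + μ_h)/2)·I`,
for every `k ≥ 1` the operator
`(k + k₀)(k Q + (L_h + μ_g)·I) − (k + k₀ + 1)((k+1) Q + (L_h − μ_h)·I)`
is positive semidefinite (Proposition 2.12 in the paper). -/
theorem stmt_12 {Z : Type*}
    [NormedAddCommGroup Z] [InnerProductSpace ℝ Z] [FiniteDimensional ℝ Z]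
    (μg μh Lh : ℝ) (hμg : 0 ≤ μg) (hμh : 0 ≤ μh) (hμ : 0 < μg + μh) (hL : μh ≤ Lh)
    (Q : Z →L[ℝ] Z) (hQ : IsSelfAdjoint Q)
    (hQup : ∀ v : Z, ⟪v, Q v⟫ ≤ (μg + μh) / 2 * ‖v‖ ^ 2)
    (k0 : ℤ) (hk0 : k0 = ⌈(1 : ℝ) + 2 * (Lh - μh) / (μg + μh)⌉) :
    ∀ k : ℕ, 1 ≤ k → ∀ v : Z,
      0 ≤ ((k : ℝ) + (k0 : ℝ)) * ((k : ℝ) * ⟪v, Q v⟫ + (Lh + μg) * ‖v‖ ^ 2)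
          - ((k : ℝ) + (k0 : ℝ) + 1) * (((k : ℝ) + 1) * ⟪v, Q v⟫ + (Lh - μh) * ‖v‖ ^ 2) :=
  stmt_12_general μg μh Lh hμ hL Q hQup k0 hk0
end
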